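/- (Well-definedness of the Armijo step.) Let X ∈ RB^{M×N}, f(W,H) = (1/2)‖X - W·H‖_F^2, W_t ∈ RB_+^{M×l}, H_t ∈ RB_{+j}^{l×N}, σ ∈ (0,1), μ ∈ (0,1). Then there exists a nonnegative integer d such that, setting W(d) = P_+(W_t - μ^d·∇_W f(W_t,H_t)), the Armijo sufficient-decrease condition f(W(d),H_t) - f(W_t,H_t) ≤ σ·Re⟨∇_W f(W_t,H_t), W(d) - W_t⟩ holds. Analogously, there exists a nonnegative integer s such that H(s) = P_{+j}(H_t - μ^s·∇_H f(W_t,H_t)) satisfies f(W_t,H(s)) - f(W_t,H_t) ≤ σ·Re⟨∇_H f(W_t,H_t), H(s) - H_t⟩. -/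
import Mathlib


open Matrix

noncomputable section

/-- A reduced biquaternion `q = q0 + q1*i + q2*j + q3*k` with real components,
where `i^2 = k^2 = -1`, `j^2 = 1`, `ij = ji = k`, `jk = kj = i`, `ki = ik = -j`. -/
@[ext]
structure RB where
  r : ℝ
  i : ℝ
  j : ℝ
  k : ℝ

namespace RB

instance : Zero RB := ⟨⟨0, 0, 0, 0⟩⟩
instance : One RB := ⟨⟨1, 0, 0, 0⟩⟩
instance : Add RB := ⟨fun p q => ⟨p.r + q.r, p.i + q.i, p.j + q.j, p.k + q.k⟩⟩
instance : Neg RB := ⟨fun p => ⟨-p.r, -p.i, -p.j, -p.k⟩⟩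
instance : Mul RB := ⟨fun p q =>
  ⟨p.r * q.r - p.i * q.i + p.j * q.j - p.k * q.k,
   p.r * q.i + p.i * q.r + p.j * q.k + p.k * q.j,
   p.r * q.j + p.j * q.r - p.i * q.k - p.k * q.i,
   p.r * q.k + p.k * q.r + p.i * q.j + p.j * q.i⟩⟩
instance : SMul ℝ RB := ⟨fun a q => ⟨a * q.r, a * q.i, a * q.j, a * q.k⟩⟩

@[simp] theorem zero_r : (0 : RB).r = 0 := rfl
@[simp] theorem zero_i : (0 : RB).i = 0 := rfl
@[simp] theorem zero_j : (0 : RB).j = 0 := rfl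
@[simp] theorem zero_k : (0 : RB).k = 0 := rfl
@[simp] theorem one_r : (1 : RB).r = 1 := rfl
@[simp] theorem one_i : (1 : RB).i = 0 := rfl
@[simp] theorem one_j : (1 : RB).j = 0 := rfl
@[simp] theorem one_k : (1 : RB).k = 0 := rfl
@[simp] theorem add_r (p q : RB) : (p + q).r = p.r + q.r := rfl
@[simp] theorem add_i (p q : RB) : (p + q).i = p.i + q.i := rfl
@[simp] theorem add_j (p q : RB) : (p + q).j = p.j + q.j := rfl
@[simp] theorem add_k (p q : RB) : (p + q).k = p.k + q.k := rfl
@[simp] theorem neg_r (p : RB) : (-p).r = -p.r := rfl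
@[simp] theorem neg_i (p : RB) : (-p).i = -p.i := rfl
@[simp] theorem neg_j (p : RB) : (-p).j = -p.j := rfl
@[simp] theorem neg_k (p : RB) : (-p).k = -p.k := rfl
@[simp] theorem mul_r (p q : RB) :
    (p * q).r = p.r * q.r - p.i * q.i + p.j * q.j - p.k * q.k := rfl
@[simp] theorem mul_i (p q : RB) :
    (p * q).i = p.r * q.i + p.i * q.r + p.j * q.k + p.k * q.j := rfl
@[simp] theorem mul_j (p q : RB) :
    (p * q).j = p.r * q.j + p.j * q.r - p.i * q.k - p.k * q.i := rfl
@[simp] theorem mul_k (p q : RB) :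
    (p * q).k = p.r * q.k + p.k * q.r + p.i * q.j + p.j * q.i := rfl
@[simp] theorem smul_r (a : ℝ) (q : RB) : (a • q).r = a * q.r := rfl
@[simp] theorem smul_i (a : ℝ) (q : RB) : (a • q).i = a * q.i := rfl
@[simp] theorem smul_j (a : ℝ) (q : RB) : (a • q).j = a * q.j := rfl
@[simp] theorem smul_k (a : ℝ) (q : RB) : (a • q).k = a * q.k := rfl

instance : CommRing RB where
  add := (· + ·)
  zero := 0
  neg := Neg.neg
  mul := (· * ·)
  one := 1
  add_assoc p q s := by ext <;> simp <;> ring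
  zero_add p := by ext <;> simp
  add_zero p := by ext <;> simp
  add_comm p q := by ext <;> simp <;> ring
  neg_add_cancel p := by ext <;> simp
  mul_assoc p q s := by ext <;> simp <;> ring
  one_mul p := by ext <;> simp
  mul_one p := by ext <;> simp
  left_distrib p q s := by ext <;> simp <;> ring
  right_distrib p q s := by ext <;> simp <;> ring
  zero_mul p := by ext <;> simp
  mul_zero p := by ext <;> simp
  mul_comm p q := by ext <;> simp <;> ring
  nsmul := nsmulRec
  zsmul := zsmulRec

/-- The imaginary unit `i` of the reduced biquaternions. -/
def uI : RB := ⟨0, 1, 0, 0⟩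
/-- The imaginary unit `j` of the reduced biquaternions. -/
def uJ : RB := ⟨0, 0, 1, 0⟩
/-- The imaginary unit `k` of the reduced biquaternions. -/
def uK : RB := ⟨0, 0, 0, 1⟩

/-- Embedding of the reals into the reduced biquaternions. -/
def ofReal (a : ℝ) : RB := ⟨a, 0, 0, 0⟩

/-- Embedding of the complex numbers into the reduced biquaternions,
`x + y*î ↦ x + y*i`. -/
def ofComplex (z : ℂ) : RB := ⟨z.re, z.im, 0, 0⟩

/-- Conjugation of a reduced biquaternion: `q* = q0 - q1*i + q2*j - q3*k`. -/
def conj (q : RB) : RB := ⟨q.r, -q.i, q.j, -q.k⟩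

instance : Star RB := ⟨conj⟩

/-- The idempotent `e1 = (1 + j)/2`. -/
def e1 : RB := ⟨1/2, 0, 1/2, 0⟩

/-- The idempotent `e2 = (1 - j)/2`. -/
def e2 : RB := ⟨1/2, 0, -(1/2), 0⟩

end RB

/-- Real-part component matrix of an RB matrix. -/
def Mr {m n : Type*} (Q : Matrix m n RB) : Matrix m n ℝ := Matrix.of fun a b => (Q a b).r
/-- `i`-part component matrix of an RB matrix. -/
def Mi {m n : Type*} (Q : Matrix m n RB) : Matrix m n ℝ := Matrix.of fun a b => (Q a b).i
/-- `j`-part component matrix of an RB matrix. -/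
def Mj {m n : Type*} (Q : Matrix m n RB) : Matrix m n ℝ := Matrix.of fun a b => (Q a b).j
/-- `k`-part component matrix of an RB matrix. -/
def Mk {m n : Type*} (Q : Matrix m n RB) : Matrix m n ℝ := Matrix.of fun a b => (Q a b).k

/-- The RB matrix `Q0 + Q1*i + Q2*j + Q3*k` built from four real component matrices. -/
def mk4 {m n : Type*} (A0 A1 A2 A3 : m → n → ℝ) : Matrix m n RB :=
  Matrix.of fun a b => ⟨A0 a b, A1 a b, A2 a b, A3 a b⟩

/-- Inner product of two RB matrices: `⟨Q,P⟩ = Σ_{m,n} (q_{mn})* ⬝ p_{mn}`. -/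
def minner {m n : Type*} [Fintype m] [Fintype n] (Q P : Matrix m n RB) : RB :=
  ∑ a, ∑ b, RB.conj (Q a b) * P a b

/-- The Frobenius norm of an RB matrix, `‖Q‖_F = sqrt(Re⟨Q,Q⟩)`. -/
def fnorm {m n : Type*} [Fintype m] [Fintype n] (Q : Matrix m n RB) : ℝ :=
  Real.sqrt (minner Q Q).r

/-- Real Frobenius inner product of real matrices. -/
def finner {m n : Type*} [Fintype m] [Fintype n] (A B : Matrix m n ℝ) : ℝ :=
  ∑ a, ∑ b, A a b * B a b

/-- Real Frobenius norm of a real matrix. -/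
def rnorm {m n : Type*} [Fintype m] [Fintype n] (A : Matrix m n ℝ) : ℝ :=
  Real.sqrt (finner A A)

/-- `Q ∈ RB_+^{M×N}`: all four real component matrices are entrywise nonnegative. -/
def Pos {m n : Type*} (Q : Matrix m n RB) : Prop :=
  ∀ a b, 0 ≤ (Q a b).r ∧ 0 ≤ (Q a b).i ∧ 0 ≤ (Q a b).j ∧ 0 ≤ (Q a b).k

/-- `Q ∈ RB_{+j}^{M×N}`: `Q = Q0 + Q2*j` with `Q0, Q2` entrywise nonnegative. -/
def PosJ {m n : Type*} (Q : Matrix m n RB) : Prop :=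
  ∀ a b, 0 ≤ (Q a b).r ∧ (Q a b).i = 0 ∧ 0 ≤ (Q a b).j ∧ (Q a b).k = 0

/-- The projection `P_+` onto `RB_+^{M×N}`: entrywise positive part in all four components. -/
def proj {m n : Type*} (Q : Matrix m n RB) : Matrix m n RB :=
  Matrix.of fun a b => ⟨max (Q a b).r 0, max (Q a b).i 0, max (Q a b).j 0, max (Q a b).k 0⟩

/-- The projection `P_{+j}` onto `RB_{+j}^{M×N}`: `Q ↦ max(Q0,0) + max(Q2,0)*j`. -/
def projJ {m n : Type*} (Q : Matrix m n RB) : Matrix m n RB :=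
  Matrix.of fun a b => ⟨max (Q a b).r 0, 0, max (Q a b).j 0, 0⟩

/-- The objective `f(W,H) = (1/2)*‖X - W*H‖_F^2`. -/
def objf {M N l : ℕ} (X : Matrix (Fin M) (Fin N) RB) (W : Matrix (Fin M) (Fin l) RB)
    (H : Matrix (Fin l) (Fin N) RB) : ℝ :=
  (1 / 2) * fnorm (X - W * H) ^ 2

/-- The RB gradient `∇_W f(W,H) = (W*H - X)*H^H`. -/
def gradW {M N l : ℕ} (X : Matrix (Fin M) (Fin N) RB) (W : Matrix (Fin M) (Fin l) RB)
    (H : Matrix (Fin l) (Fin N) RB) : Matrix (Fin M) (Fin l) RB :=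
  (W * H - X) * Hᴴ

/-- The RB gradient `∇_H f(W,H) = W^H*(W*H - X)`. -/
def gradH {M N l : ℕ} (X : Matrix (Fin M) (Fin N) RB) (W : Matrix (Fin M) (Fin l) RB)
    (H : Matrix (Fin l) (Fin N) RB) : Matrix (Fin l) (Fin N) RB :=
  Wᴴ * (W * H - X)

/-- Entrywise embedding of a complex matrix into RB matrices. -/
def cmat {m n : Type*} (A : Matrix m n ℂ) : Matrix m n RB :=
  Matrix.of fun a b => RB.ofComplex (A a b)

/-- The `e1–e2` form `N1*e1 + N2*e2` of an RB matrix, for complex matrices `N1, N2`. -/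
def eform {m n : Type*} (N1 N2 : Matrix m n ℂ) : Matrix m n RB :=
  Matrix.of fun a b => RB.ofComplex (N1 a b) * RB.e1 + RB.ofComplex (N2 a b) * RB.e2
namespace RB

@[simp] theorem sub_r' (p q : RB) : (p - q).r = p.r - q.r := rfl
@[simp] theorem sub_i' (p q : RB) : (p - q).i = p.i - q.i := rfl
@[simp] theorem sub_j' (p q : RB) : (p - q).j = p.j - q.j := rfl
@[simp] theorem sub_k' (p q : RB) : (p - q).k = p.k - q.k := rfl

@[simp] theorem conj_r (p : RB) : (conj p).r = p.r := rfl
@[simp] theorem conj_i (p : RB) : (conj p).i = -p.i := rfl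
@[simp] theorem conj_j (p : RB) : (conj p).j = p.j := rfl
@[simp] theorem conj_k (p : RB) : (conj p).k = -p.k := rfl

theorem conj_mul' (p q : RB) : conj (p * q) = conj p * conj q := by
  ext <;> simp <;> ring

theorem conj_conj' (p : RB) : conj (conj p) = p := by ext <;> simp

theorem conj_neg' (p : RB) : conj (-p) = -conj p := by ext <;> simp

@[simp] theorem star_def (p : RB) : star p = conj p := rfl

theorem sum_r {α : Type*} (s : Finset α) (f : α → RB) :
    (∑ x ∈ s, f x).r = ∑ x ∈ s, (f x).r := by
  induction s using Finset.cons_induction with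
  | empty => rfl
  | cons a s ha ih => simp [Finset.sum_cons, ih]

theorem sum_i {α : Type*} (s : Finset α) (f : α → RB) :
    (∑ x ∈ s, f x).i = ∑ x ∈ s, (f x).i := by
  induction s using Finset.cons_induction with
  | empty => rfl
  | cons a s ha ih => simp [Finset.sum_cons, ih]

theorem sum_j {α : Type*} (s : Finset α) (f : α → RB) :
    (∑ x ∈ s, f x).j = ∑ x ∈ s, (f x).j := by
  induction s using Finset.cons_induction with
  | empty => rfl
  | cons a s ha ih => simp [Finset.sum_cons, ih]

theorem sum_k {α : Type*} (s : Finset α) (f : α → RB) :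
    (∑ x ∈ s, f x).k = ∑ x ∈ s, (f x).k := by
  induction s using Finset.cons_induction with
  | empty => rfl
  | cons a s ha ih => simp [Finset.sum_cons, ih]

theorem conj_sum {α : Type*} (s : Finset α) (f : α → RB) :
    conj (∑ x ∈ s, f x) = ∑ x ∈ s, conj (f x) := by
  induction s using Finset.cons_induction with
  | empty => ext <;> simp
  | cons a s ha ih => simp only [Finset.sum_cons, ← ih]; ext <;> simp <;> ring

end RB
theorem minner_r_eq {m n : Type*} [Fintype m] [Fintype n] (Q P : Matrix m n RB) :
    (minner Q P).r = ∑ a, ∑ b, ((Q a b).r * (P a b).r + (Q a b).i * (P a b).i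
      + (Q a b).j * (P a b).j + (Q a b).k * (P a b).k) := by
  simp only [minner, RB.sum_r]
  refine Finset.sum_congr rfl fun a _ => Finset.sum_congr rfl fun b _ => ?_
  simp
  try ring

theorem minner_self_nonneg {m n : Type*} [Fintype m] [Fintype n] (Q : Matrix m n RB) :
    0 ≤ (minner Q Q).r := by
  rw [minner_r_eq]
  refine Finset.sum_nonneg fun a _ => Finset.sum_nonneg fun b _ => ?_
  nlinarith [sq_nonneg (Q a b).r, sq_nonneg (Q a b).i, sq_nonneg (Q a b).j, sq_nonneg (Q a b).k]

theorem fnorm_sq {m n : Type*} [Fintype m] [Fintype n] (Q : Matrix m n RB) :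
    fnorm Q ^ 2 = (minner Q Q).r :=
  Real.sq_sqrt (minner_self_nonneg Q)

theorem minner_neg_left {m n : Type*} [Fintype m] [Fintype n] (Q P : Matrix m n RB) :
    minner (-Q) P = - minner Q P := by
  unfold minner
  rw [← Finset.sum_neg_distrib]
  refine Finset.sum_congr rfl fun a _ => ?_
  rw [← Finset.sum_neg_distrib]
  refine Finset.sum_congr rfl fun b _ => ?_
  rw [Matrix.neg_apply, RB.conj_neg', neg_mul]

theorem minner_sub_sub_r {m n : Type*} [Fintype m] [Fintype n] (A B : Matrix m n RB) :
    (minner (A - B) (A - B)).r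
      = (minner A A).r - 2 * (minner A B).r + (minner B B).r := by
  rw [minner_r_eq A A, minner_r_eq A B, minner_r_eq B B, minner_r_eq]
  simp only [Finset.mul_sum]
  rw [← Finset.sum_sub_distrib, ← Finset.sum_add_distrib]
  refine Finset.sum_congr rfl fun a _ => ?_
  rw [← Finset.sum_sub_distrib, ← Finset.sum_add_distrib]
  refine Finset.sum_congr rfl fun b _ => ?_
  simp only [Matrix.sub_apply, RB.sub_r', RB.sub_i', RB.sub_j', RB.sub_k']
  ring

theorem minner_mul_right {M N l : ℕ} (A : Matrix (Fin M) (Fin N) RB)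
    (B : Matrix (Fin M) (Fin l) RB) (H : Matrix (Fin l) (Fin N) RB) :
    minner A (B * H) = minner (A * Hᴴ) B := by
  simp only [minner, Matrix.mul_apply, Matrix.conjTranspose_apply, RB.star_def,
    RB.conj_sum, Finset.sum_mul, Finset.mul_sum, RB.conj_mul', RB.conj_conj']
  refine Finset.sum_congr rfl fun m _ => ?_
  rw [Finset.sum_comm]
  exact Finset.sum_congr rfl fun p _ => Finset.sum_congr rfl fun n _ => by ring

theorem minner_mul_left {M N l : ℕ} (A : Matrix (Fin M) (Fin N) RB)
    (W : Matrix (Fin M) (Fin l) RB) (B : Matrix (Fin l) (Fin N) RB) :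
    minner A (W * B) = minner (Wᴴ * A) B := by
  simp only [minner, Matrix.mul_apply, Matrix.conjTranspose_apply, RB.star_def,
    RB.conj_sum, Finset.sum_mul, Finset.mul_sum, RB.conj_mul', RB.conj_conj']
  refine Eq.trans (Finset.sum_congr rfl fun m _ => Finset.sum_comm) ?_
  refine Eq.trans Finset.sum_comm ?_
  refine Finset.sum_congr rfl fun p _ => ?_
  refine Eq.trans Finset.sum_comm ?_
  refine Finset.sum_congr rfl fun n _ => Finset.sum_congr rfl fun m _ => by ring

theorem expand_W {M N l : ℕ} (X : Matrix (Fin M) (Fin N) RB) (W : Matrix (Fin M) (Fin l) RB)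
    (H : Matrix (Fin l) (Fin N) RB) (D : Matrix (Fin M) (Fin l) RB) :
    objf X (W + D) H - objf X W H
      = (minner (gradW X W H) D).r + (1/2) * (minner (D * H) (D * H)).r := by
  have hX : X - (W + D) * H = (X - W * H) - D * H := by rw [Matrix.add_mul]; abel
  have key : (minner (gradW X W H) D).r = -(minner (X - W * H) (D * H)).r := by
    rw [minner_mul_right]
    unfold gradW
    rw [show W * H - X = -(X - W * H) by abel, Matrix.neg_mul, minner_neg_left]
    simp
  unfold objf
  rw [hX, fnorm_sq, fnorm_sq, minner_sub_sub_r, key]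
  ring

theorem expand_H {M N l : ℕ} (X : Matrix (Fin M) (Fin N) RB) (W : Matrix (Fin M) (Fin l) RB)
    (H : Matrix (Fin l) (Fin N) RB) (D : Matrix (Fin l) (Fin N) RB) :
    objf X W (H + D) - objf X W H
      = (minner (gradH X W H) D).r + (1/2) * (minner (W * D) (W * D)).r := by
  have hX : X - W * (H + D) = (X - W * H) - W * D := by rw [Matrix.mul_add]; abel
  have key : (minner (gradH X W H) D).r = -(minner (X - W * H) (W * D)).r := by
    rw [minner_mul_left]
    unfold gradH
    rw [show Wᴴ * (W * H - X) = -(Wᴴ * (X - W * H)) by rw [show W * H - X = -(X - W*H) by abel, Matrix.mul_neg], minner_neg_left]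
    simp
  unfold objf
  rw [hX, fnorm_sq, fnorm_sq, minner_sub_sub_r, key]
  ring
theorem armijo_pt (w g t : ℝ) (hw : 0 ≤ w) :
    (max (w - t * g) 0 - w) ^ 2 + t * (g * (max (w - t * g) 0 - w)) ≤ 0 := by
  rcases le_total 0 (w - t * g) with h | h
  · rw [max_eq_left h]; nlinarith [sq_nonneg (t * g)]
  · rw [max_eq_right h]; nlinarith [mul_nonpos_of_nonneg_of_nonpos hw h]

theorem hDS_W {M l : ℕ} (W G : Matrix (Fin M) (Fin l) RB) (hW : Pos W) (t : ℝ) :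
    (minner (proj (W - t • G) - W) (proj (W - t • G) - W)).r
      + t * (minner G (proj (W - t • G) - W)).r ≤ 0 := by
  rw [minner_r_eq, minner_r_eq]
  simp only [Finset.mul_sum]
  rw [← Finset.sum_add_distrib]
  refine Finset.sum_nonpos fun a _ => ?_
  rw [← Finset.sum_add_distrib]
  refine Finset.sum_nonpos fun b _ => ?_
  obtain ⟨h1, h2, h3, h4⟩ := hW a b
  simp only [Matrix.sub_apply, Matrix.smul_apply, proj, Matrix.of_apply,
    RB.sub_r', RB.sub_i', RB.sub_j', RB.sub_k', RB.smul_r, RB.smul_i, RB.smul_j, RB.smul_k]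
  nlinarith [armijo_pt (W a b).r (G a b).r t h1, armijo_pt (W a b).i (G a b).i t h2,
    armijo_pt (W a b).j (G a b).j t h3, armijo_pt (W a b).k (G a b).k t h4]

theorem hDS_H {l N : ℕ} (H G : Matrix (Fin l) (Fin N) RB) (hH : PosJ H) (t : ℝ) :
    (minner (projJ (H - t • G) - H) (projJ (H - t • G) - H)).r
      + t * (minner G (projJ (H - t • G) - H)).r ≤ 0 := by
  rw [minner_r_eq, minner_r_eq]
  simp only [Finset.mul_sum]
  rw [← Finset.sum_add_distrib]
  refine Finset.sum_nonpos fun a _ => ?_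
  rw [← Finset.sum_add_distrib]
  refine Finset.sum_nonpos fun b _ => ?_
  obtain ⟨h1, h2, h3, h4⟩ := hH a b
  simp only [Matrix.sub_apply, Matrix.smul_apply, projJ, Matrix.of_apply,
    RB.sub_r', RB.sub_i', RB.sub_j', RB.sub_k', RB.smul_r, RB.smul_i, RB.smul_j, RB.smul_k,
    h2, h4]
  nlinarith [armijo_pt (H a b).r (G a b).r t h1, armijo_pt (H a b).j (G a b).j t h3]

/-- Sum of absolute values of all components of an RB matrix. -/
def hbound {m n : Type*} [Fintype m] [Fintype n] (H : Matrix m n RB) : ℝ :=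
  ∑ p, ∑ q, (|(H p q).r| + |(H p q).i| + |(H p q).j| + |(H p q).k|)

theorem hbound_nonneg {m n : Type*} [Fintype m] [Fintype n] (H : Matrix m n RB) :
    0 ≤ hbound H :=
  Finset.sum_nonneg fun _ _ => Finset.sum_nonneg fun _ _ => by positivity

theorem hbound_entry {m n : Type*} [Fintype m] [Fintype n] (H : Matrix m n RB) (p : m) (q : n) :
    |(H p q).r| ≤ hbound H ∧ |(H p q).i| ≤ hbound H ∧
      |(H p q).j| ≤ hbound H ∧ |(H p q).k| ≤ hbound H := by
  have step : (|(H p q).r| + |(H p q).i| + |(H p q).j| + |(H p q).k|) ≤ hbound H := by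
    calc (|(H p q).r| + |(H p q).i| + |(H p q).j| + |(H p q).k|)
        ≤ ∑ q', (|(H p q').r| + |(H p q').i| + |(H p q').j| + |(H p q').k|) :=
          Finset.single_le_sum
            (f := fun q' => |(H p q').r| + |(H p q').i| + |(H p q').j| + |(H p q').k|)
            (fun i _ => by positivity) (Finset.mem_univ q)
      _ ≤ hbound H :=
          Finset.single_le_sum
            (f := fun p' => ∑ q', (|(H p' q').r| + |(H p' q').i| + |(H p' q').j| + |(H p' q').k|))
            (fun i _ => Finset.sum_nonneg fun _ _ => by positivity) (Finset.mem_univ p)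
  refine ⟨?_, ?_, ?_, ?_⟩ <;>
    · have := abs_nonneg (H p q).r
      have := abs_nonneg (H p q).i
      have := abs_nonneg (H p q).j
      have := abs_nonneg (H p q).k
      linarith

theorem RB.abs_mul_r (x y : RB) (b : ℝ) (hr : |y.r| ≤ b) (hi : |y.i| ≤ b)
    (hj : |y.j| ≤ b) (hk : |y.k| ≤ b) :
    |(x * y).r| ≤ (|x.r| + |x.i| + |x.j| + |x.k|) * b := by
  have key : ∀ u v : ℝ, |v| ≤ b → |u * v| ≤ |u| * b := fun u v hv => by
    rw [abs_mul]; exact mul_le_mul_of_nonneg_left hv (abs_nonneg _)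
  have t1 : |(x * y).r| ≤ |x.r * y.r| + |x.i * y.i| + |x.j * y.j| + |x.k * y.k| := by
    rw [RB.mul_r, abs_le]
    constructor <;> [skip; skip] <;>
      linarith [le_abs_self (x.r * y.r), neg_abs_le (x.r * y.r),
        le_abs_self (x.i * y.i), neg_abs_le (x.i * y.i),
        le_abs_self (x.j * y.j), neg_abs_le (x.j * y.j),
        le_abs_self (x.k * y.k), neg_abs_le (x.k * y.k)]
  nlinarith [key x.r y.r hr, key x.i y.i hi, key x.j y.j hj, key x.k y.k hk]

theorem RB.abs_mul_i (x y : RB) (b : ℝ) (hr : |y.r| ≤ b) (hi : |y.i| ≤ b)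
    (hj : |y.j| ≤ b) (hk : |y.k| ≤ b) :
    |(x * y).i| ≤ (|x.r| + |x.i| + |x.j| + |x.k|) * b := by
  have key : ∀ u v : ℝ, |v| ≤ b → |u * v| ≤ |u| * b := fun u v hv => by
    rw [abs_mul]; exact mul_le_mul_of_nonneg_left hv (abs_nonneg _)
  have t1 : |(x * y).i| ≤ |x.r * y.i| + |x.i * y.r| + |x.j * y.k| + |x.k * y.j| := by
    rw [RB.mul_i, abs_le]
    constructor <;> [skip; skip] <;>
      linarith [le_abs_self (x.r * y.i), neg_abs_le (x.r * y.i),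
        le_abs_self (x.i * y.r), neg_abs_le (x.i * y.r),
        le_abs_self (x.j * y.k), neg_abs_le (x.j * y.k),
        le_abs_self (x.k * y.j), neg_abs_le (x.k * y.j)]
  nlinarith [key x.r y.i hi, key x.i y.r hr, key x.j y.k hk, key x.k y.j hj]

theorem RB.abs_mul_j (x y : RB) (b : ℝ) (hr : |y.r| ≤ b) (hi : |y.i| ≤ b)
    (hj : |y.j| ≤ b) (hk : |y.k| ≤ b) :
    |(x * y).j| ≤ (|x.r| + |x.i| + |x.j| + |x.k|) * b := by
  have key : ∀ u v : ℝ, |v| ≤ b → |u * v| ≤ |u| * b := fun u v hv => by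
    rw [abs_mul]; exact mul_le_mul_of_nonneg_left hv (abs_nonneg _)
  have t1 : |(x * y).j| ≤ |x.r * y.j| + |x.j * y.r| + |x.i * y.k| + |x.k * y.i| := by
    rw [RB.mul_j, abs_le]
    constructor <;> [skip; skip] <;>
      linarith [le_abs_self (x.r * y.j), neg_abs_le (x.r * y.j),
        le_abs_self (x.j * y.r), neg_abs_le (x.j * y.r),
        le_abs_self (x.i * y.k), neg_abs_le (x.i * y.k),
        le_abs_self (x.k * y.i), neg_abs_le (x.k * y.i)]
  nlinarith [key x.r y.j hj, key x.j y.r hr, key x.i y.k hk, key x.k y.i hi]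

theorem RB.abs_mul_k (x y : RB) (b : ℝ) (hr : |y.r| ≤ b) (hi : |y.i| ≤ b)
    (hj : |y.j| ≤ b) (hk : |y.k| ≤ b) :
    |(x * y).k| ≤ (|x.r| + |x.i| + |x.j| + |x.k|) * b := by
  have key : ∀ u v : ℝ, |v| ≤ b → |u * v| ≤ |u| * b := fun u v hv => by
    rw [abs_mul]; exact mul_le_mul_of_nonneg_left hv (abs_nonneg _)
  have t1 : |(x * y).k| ≤ |x.r * y.k| + |x.k * y.r| + |x.i * y.j| + |x.j * y.i| := by
    rw [RB.mul_k, abs_le]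
    constructor <;> [skip; skip] <;>
      linarith [le_abs_self (x.r * y.k), neg_abs_le (x.r * y.k),
        le_abs_self (x.k * y.r), neg_abs_le (x.k * y.r),
        le_abs_self (x.i * y.j), neg_abs_le (x.i * y.j),
        le_abs_self (x.j * y.i), neg_abs_le (x.j * y.i)]
  nlinarith [key x.r y.k hk, key x.k y.r hr, key x.i y.j hj, key x.j y.i hi]

theorem core_ineq (t C σ D S Q : ℝ) (ht : 0 < t) (hσ : σ < 1)
    (hCt : C * t ≤ 2 * (1 - σ)) (hS : 0 ≤ S) (hDS : S + t * D ≤ 0) (hQ : Q ≤ C * S) :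
    D + (1 / 2) * Q ≤ σ * D := by
  have h1 : Q * t ≤ C * S * t := mul_le_mul_of_nonneg_right hQ ht.le
  have h2 : C * t * S ≤ 2 * (1 - σ) * S := mul_le_mul_of_nonneg_right hCt hS
  have h3 : (1 - σ) * (S + t * D) ≤ 0 :=
    mul_nonpos_of_nonneg_of_nonpos (by linarith) hDS
  nlinarith [ht]
/-- Sum of squares of the four components of an entry. -/
def entrysq {m n : Type*} (Q : Matrix m n RB) (a : m) (b : n) : ℝ :=
  (Q a b).r * (Q a b).r + (Q a b).i * (Q a b).i + (Q a b).j * (Q a b).j + (Q a b).k * (Q a b).k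

/-- Sum of absolute values of the four components of an entry. -/
def scomp {m n : Type*} (Q : Matrix m n RB) (a : m) (b : n) : ℝ :=
  |(Q a b).r| + |(Q a b).i| + |(Q a b).j| + |(Q a b).k|

theorem entrysq_nonneg {m n : Type*} (Q : Matrix m n RB) (a : m) (b : n) :
    0 ≤ entrysq Q a b := by
  unfold entrysq
  nlinarith [mul_self_nonneg (Q a b).r, mul_self_nonneg (Q a b).i,
    mul_self_nonneg (Q a b).j, mul_self_nonneg (Q a b).k]

theorem scomp_nonneg {m n : Type*} (Q : Matrix m n RB) (a : m) (b : n) :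
    0 ≤ scomp Q a b := by
  unfold scomp; positivity

theorem minner_self_eq {m n : Type*} [Fintype m] [Fintype n] (Q : Matrix m n RB) :
    (minner Q Q).r = ∑ a, ∑ b, entrysq Q a b := minner_r_eq Q Q

theorem scomp_sq_le {m n : Type*} (Q : Matrix m n RB) (a : m) (b : n) :
    scomp Q a b ^ 2 ≤ 4 * entrysq Q a b := by
  unfold scomp entrysq
  nlinarith [sq_abs (Q a b).r, sq_abs (Q a b).i, sq_abs (Q a b).j, sq_abs (Q a b).k,
    sq_nonneg (|(Q a b).r| - |(Q a b).i|), sq_nonneg (|(Q a b).r| - |(Q a b).j|),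
    sq_nonneg (|(Q a b).r| - |(Q a b).k|), sq_nonneg (|(Q a b).i| - |(Q a b).j|),
    sq_nonneg (|(Q a b).i| - |(Q a b).k|), sq_nonneg (|(Q a b).j| - |(Q a b).k|)]

theorem entry_bound_right {M N l : ℕ} (D : Matrix (Fin M) (Fin l) RB)
    (H : Matrix (Fin l) (Fin N) RB) (m : Fin M) (n : Fin N) :
    entrysq (D * H) m n ≤ 16 * (l : ℝ) * (hbound H) ^ 2 * ∑ p, entrysq D m p := by
  have hb : 0 ≤ hbound H := hbound_nonneg H
  have habs_r : |((D * H) m n).r| ≤ (∑ p, scomp D m p) * hbound H := by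
    rw [Matrix.mul_apply, RB.sum_r]
    calc |∑ p, (D m p * H p n).r| ≤ ∑ p, |(D m p * H p n).r| := Finset.abs_sum_le_sum_abs _ _
      _ ≤ ∑ p, scomp D m p * hbound H := Finset.sum_le_sum fun p _ => by
            obtain ⟨e1, e2, e3, e4⟩ := hbound_entry H p n
            exact RB.abs_mul_r _ _ _ e1 e2 e3 e4
      _ = (∑ p, scomp D m p) * hbound H := (Finset.sum_mul _ _ _).symm
  have habs_i : |((D * H) m n).i| ≤ (∑ p, scomp D m p) * hbound H := by
    rw [Matrix.mul_apply, RB.sum_i]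
    calc |∑ p, (D m p * H p n).i| ≤ ∑ p, |(D m p * H p n).i| := Finset.abs_sum_le_sum_abs _ _
      _ ≤ ∑ p, scomp D m p * hbound H := Finset.sum_le_sum fun p _ => by
            obtain ⟨e1, e2, e3, e4⟩ := hbound_entry H p n
            exact RB.abs_mul_i _ _ _ e1 e2 e3 e4
      _ = (∑ p, scomp D m p) * hbound H := (Finset.sum_mul _ _ _).symm
  have habs_j : |((D * H) m n).j| ≤ (∑ p, scomp D m p) * hbound H := by
    rw [Matrix.mul_apply, RB.sum_j]
    calc |∑ p, (D m p * H p n).j| ≤ ∑ p, |(D m p * H p n).j| := Finset.abs_sum_le_sum_abs _ _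
      _ ≤ ∑ p, scomp D m p * hbound H := Finset.sum_le_sum fun p _ => by
            obtain ⟨e1, e2, e3, e4⟩ := hbound_entry H p n
            exact RB.abs_mul_j _ _ _ e1 e2 e3 e4
      _ = (∑ p, scomp D m p) * hbound H := (Finset.sum_mul _ _ _).symm
  have habs_k : |((D * H) m n).k| ≤ (∑ p, scomp D m p) * hbound H := by
    rw [Matrix.mul_apply, RB.sum_k]
    calc |∑ p, (D m p * H p n).k| ≤ ∑ p, |(D m p * H p n).k| := Finset.abs_sum_le_sum_abs _ _
      _ ≤ ∑ p, scomp D m p * hbound H := Finset.sum_le_sum fun p _ => by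
            obtain ⟨e1, e2, e3, e4⟩ := hbound_entry H p n
            exact RB.abs_mul_k _ _ _ e1 e2 e3 e4
      _ = (∑ p, scomp D m p) * hbound H := (Finset.sum_mul _ _ _).symm
  have hsnn : 0 ≤ ∑ p, scomp D m p := Finset.sum_nonneg fun p _ => scomp_nonneg D m p
  have hsq : (∑ p, scomp D m p) ^ 2 ≤ (l : ℝ) * ∑ p, scomp D m p ^ 2 := by
    simpa using sq_sum_le_card_mul_sum_sq
      (s := (Finset.univ : Finset (Fin l))) (f := fun p => scomp D m p)
  have hS4 : ∑ p, scomp D m p ^ 2 ≤ 4 * ∑ p, entrysq D m p := by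
    rw [Finset.mul_sum]
    exact Finset.sum_le_sum fun p _ => scomp_sq_le D m p
  have hAnn : 0 ≤ (∑ p, scomp D m p) * hbound H := mul_nonneg hsnn hb
  have c1 : ((D * H) m n).r * ((D * H) m n).r ≤ ((∑ p, scomp D m p) * hbound H) ^ 2 := by
    nlinarith [habs_r, abs_nonneg ((D * H) m n).r, abs_mul_abs_self ((D * H) m n).r]
  have c2 : ((D * H) m n).i * ((D * H) m n).i ≤ ((∑ p, scomp D m p) * hbound H) ^ 2 := by
    nlinarith [habs_i, abs_nonneg ((D * H) m n).i, abs_mul_abs_self ((D * H) m n).i]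
  have c3 : ((D * H) m n).j * ((D * H) m n).j ≤ ((∑ p, scomp D m p) * hbound H) ^ 2 := by
    nlinarith [habs_j, abs_nonneg ((D * H) m n).j, abs_mul_abs_self ((D * H) m n).j]
  have c4 : ((D * H) m n).k * ((D * H) m n).k ≤ ((∑ p, scomp D m p) * hbound H) ^ 2 := by
    nlinarith [habs_k, abs_nonneg ((D * H) m n).k, abs_mul_abs_self ((D * H) m n).k]
  have cb : ((∑ p, scomp D m p) * hbound H) ^ 2
      ≤ ((l : ℝ) * (4 * ∑ p, entrysq D m p)) * hbound H ^ 2 := by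
    rw [mul_pow]
    refine mul_le_mul_of_nonneg_right ?_ (sq_nonneg _)
    exact hsq.trans (mul_le_mul_of_nonneg_left hS4 (by positivity))
  rw [show entrysq (D * H) m n = ((D * H) m n).r * ((D * H) m n).r
    + ((D * H) m n).i * ((D * H) m n).i + ((D * H) m n).j * ((D * H) m n).j
    + ((D * H) m n).k * ((D * H) m n).k from rfl]
  nlinarith [c1, c2, c3, c4, cb]

theorem prodbound_right {M N l : ℕ} (D : Matrix (Fin M) (Fin l) RB)
    (H : Matrix (Fin l) (Fin N) RB) :
    (minner (D * H) (D * H)).r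
      ≤ 16 * (N : ℝ) * l * hbound H ^ 2 * (minner D D).r := by
  rw [minner_self_eq, minner_self_eq]
  calc ∑ m, ∑ n, entrysq (D * H) m n
      ≤ ∑ m, ∑ _n : Fin N, (16 * (l : ℝ) * hbound H ^ 2 * ∑ p, entrysq D m p) :=
        Finset.sum_le_sum fun m _ => Finset.sum_le_sum fun n _ => entry_bound_right D H m n
    _ = 16 * (N : ℝ) * l * hbound H ^ 2 * ∑ m, ∑ p, entrysq D m p := by
        simp only [Finset.sum_const, Finset.card_univ, Fintype.card_fin, nsmul_eq_mul,
          Finset.mul_sum]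
        exact Finset.sum_congr rfl fun m _ => Finset.sum_congr rfl fun p _ => by ring
theorem entry_bound_left {M N l : ℕ} (W : Matrix (Fin M) (Fin l) RB)
    (D : Matrix (Fin l) (Fin N) RB) (m : Fin M) (n : Fin N) :
    entrysq (W * D) m n ≤ 16 * (l : ℝ) * (hbound W) ^ 2 * ∑ p, entrysq D p n := by
  have hb : 0 ≤ hbound W := hbound_nonneg W
  have hcomm : ∀ p, W m p * D p n = D p n * W m p := fun p => mul_comm _ _
  have habs_r : |((W * D) m n).r| ≤ (∑ p, scomp D p n) * hbound W := by
    rw [Matrix.mul_apply]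
    simp only [hcomm]
    rw [RB.sum_r]
    calc |∑ p, (D p n * W m p).r| ≤ ∑ p, |(D p n * W m p).r| := Finset.abs_sum_le_sum_abs _ _
      _ ≤ ∑ p, scomp D p n * hbound W := Finset.sum_le_sum fun p _ => by
            obtain ⟨e1, e2, e3, e4⟩ := hbound_entry W m p
            exact RB.abs_mul_r _ _ _ e1 e2 e3 e4
      _ = (∑ p, scomp D p n) * hbound W := (Finset.sum_mul _ _ _).symm
  have habs_i : |((W * D) m n).i| ≤ (∑ p, scomp D p n) * hbound W := by
    rw [Matrix.mul_apply]
    simp only [hcomm]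
    rw [RB.sum_i]
    calc |∑ p, (D p n * W m p).i| ≤ ∑ p, |(D p n * W m p).i| := Finset.abs_sum_le_sum_abs _ _
      _ ≤ ∑ p, scomp D p n * hbound W := Finset.sum_le_sum fun p _ => by
            obtain ⟨e1, e2, e3, e4⟩ := hbound_entry W m p
            exact RB.abs_mul_i _ _ _ e1 e2 e3 e4
      _ = (∑ p, scomp D p n) * hbound W := (Finset.sum_mul _ _ _).symm
  have habs_j : |((W * D) m n).j| ≤ (∑ p, scomp D p n) * hbound W := by
    rw [Matrix.mul_apply]
    simp only [hcomm]
    rw [RB.sum_j]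
    calc |∑ p, (D p n * W m p).j| ≤ ∑ p, |(D p n * W m p).j| := Finset.abs_sum_le_sum_abs _ _
      _ ≤ ∑ p, scomp D p n * hbound W := Finset.sum_le_sum fun p _ => by
            obtain ⟨e1, e2, e3, e4⟩ := hbound_entry W m p
            exact RB.abs_mul_j _ _ _ e1 e2 e3 e4
      _ = (∑ p, scomp D p n) * hbound W := (Finset.sum_mul _ _ _).symm
  have habs_k : |((W * D) m n).k| ≤ (∑ p, scomp D p n) * hbound W := by
    rw [Matrix.mul_apply]
    simp only [hcomm]
    rw [RB.sum_k]
    calc |∑ p, (D p n * W m p).k| ≤ ∑ p, |(D p n * W m p).k| := Finset.abs_sum_le_sum_abs _ _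
      _ ≤ ∑ p, scomp D p n * hbound W := Finset.sum_le_sum fun p _ => by
            obtain ⟨e1, e2, e3, e4⟩ := hbound_entry W m p
            exact RB.abs_mul_k _ _ _ e1 e2 e3 e4
      _ = (∑ p, scomp D p n) * hbound W := (Finset.sum_mul _ _ _).symm
  have hsnn : 0 ≤ ∑ p, scomp D p n := Finset.sum_nonneg fun p _ => scomp_nonneg D p n
  have hsq : (∑ p, scomp D p n) ^ 2 ≤ (l : ℝ) * ∑ p, scomp D p n ^ 2 := by
    simpa using sq_sum_le_card_mul_sum_sq
      (s := (Finset.univ : Finset (Fin l))) (f := fun p => scomp D p n)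
  have hS4 : ∑ p, scomp D p n ^ 2 ≤ 4 * ∑ p, entrysq D p n := by
    rw [Finset.mul_sum]
    exact Finset.sum_le_sum fun p _ => scomp_sq_le D p n
  have c1 : ((W * D) m n).r * ((W * D) m n).r ≤ ((∑ p, scomp D p n) * hbound W) ^ 2 := by
    nlinarith [habs_r, abs_nonneg ((W * D) m n).r, abs_mul_abs_self ((W * D) m n).r]
  have c2 : ((W * D) m n).i * ((W * D) m n).i ≤ ((∑ p, scomp D p n) * hbound W) ^ 2 := by
    nlinarith [habs_i, abs_nonneg ((W * D) m n).i, abs_mul_abs_self ((W * D) m n).i]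
  have c3 : ((W * D) m n).j * ((W * D) m n).j ≤ ((∑ p, scomp D p n) * hbound W) ^ 2 := by
    nlinarith [habs_j, abs_nonneg ((W * D) m n).j, abs_mul_abs_self ((W * D) m n).j]
  have c4 : ((W * D) m n).k * ((W * D) m n).k ≤ ((∑ p, scomp D p n) * hbound W) ^ 2 := by
    nlinarith [habs_k, abs_nonneg ((W * D) m n).k, abs_mul_abs_self ((W * D) m n).k]
  have cb : ((∑ p, scomp D p n) * hbound W) ^ 2
      ≤ ((l : ℝ) * (4 * ∑ p, entrysq D p n)) * hbound W ^ 2 := by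
    rw [mul_pow]
    refine mul_le_mul_of_nonneg_right ?_ (sq_nonneg _)
    exact hsq.trans (mul_le_mul_of_nonneg_left hS4 (by positivity))
  rw [show entrysq (W * D) m n = ((W * D) m n).r * ((W * D) m n).r
    + ((W * D) m n).i * ((W * D) m n).i + ((W * D) m n).j * ((W * D) m n).j
    + ((W * D) m n).k * ((W * D) m n).k from rfl]
  nlinarith [c1, c2, c3, c4, cb]

theorem prodbound_left {M N l : ℕ} (W : Matrix (Fin M) (Fin l) RB)
    (D : Matrix (Fin l) (Fin N) RB) :
    (minner (W * D) (W * D)).r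
      ≤ 16 * (M : ℝ) * l * hbound W ^ 2 * (minner D D).r := by
  rw [minner_self_eq, minner_self_eq]
  calc ∑ m, ∑ n, entrysq (W * D) m n
      ≤ ∑ _m : Fin M, ∑ n, (16 * (l : ℝ) * hbound W ^ 2 * ∑ p, entrysq D p n) :=
        Finset.sum_le_sum fun m _ => Finset.sum_le_sum fun n _ => entry_bound_left W D m n
    _ = 16 * (M : ℝ) * l * hbound W ^ 2 * ∑ p, ∑ n, entrysq D p n := by
        rw [Finset.sum_const, Finset.card_univ, Fintype.card_fin, nsmul_eq_mul]
        rw [Finset.sum_comm (f := fun p n => entrysq D p n)]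
        simp only [Finset.mul_sum]
        exact Finset.sum_congr rfl fun n _ => Finset.sum_congr rfl fun p _ => by ring

/-- well-definedness of the Armijo step: there exist nonnegative integers
`d` and `s` satisfying the Armijo sufficient-decrease conditions for the projected
gradient updates of `W` and of `H`. -/
theorem rb_armijo_exists {M N l : ℕ} (X : Matrix (Fin M) (Fin N) RB)
    (Wt : Matrix (Fin M) (Fin l) RB) (Ht : Matrix (Fin l) (Fin N) RB)
    (hW : Pos Wt) (hH : PosJ Ht)
    (σ μ : ℝ) (hσ : σ ∈ Set.Ioo (0 : ℝ) 1) (hμ : μ ∈ Set.Ioo (0 : ℝ) 1) :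
    (∃ d : ℕ,
      objf X (proj (Wt - μ ^ d • gradW X Wt Ht)) Ht - objf X Wt Ht ≤
        σ * (minner (gradW X Wt Ht) (proj (Wt - μ ^ d • gradW X Wt Ht) - Wt)).r) ∧
    (∃ s : ℕ,
      objf X Wt (projJ (Ht - μ ^ s • gradH X Wt Ht)) - objf X Wt Ht ≤
        σ * (minner (gradH X Wt Ht) (projJ (Ht - μ ^ s • gradH X Wt Ht) - Ht)).r) := by
  obtain ⟨hσ0, hσ1⟩ := hσ
  obtain ⟨hμ0, hμ1⟩ := hμ
  have hσ1' : (0 : ℝ) < 1 - σ := by linarith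
  constructor
  · set G := gradW X Wt Ht with hG
    set C : ℝ := 16 * (N : ℝ) * l * hbound Ht ^ 2 with hCdef
    have hC : 0 ≤ C := by positivity
    have hε : 0 < 2 * (1 - σ) / (C + 1) := by positivity
    obtain ⟨d, hd⟩ := exists_pow_lt_of_lt_one hε hμ1
    refine ⟨d, ?_⟩
    have ht : 0 < μ ^ d := pow_pos hμ0 d
    have hCt : C * μ ^ d ≤ 2 * (1 - σ) := by
      have h2 : μ ^ d * (C + 1) < 2 * (1 - σ) := (lt_div_iff₀ (by positivity)).mp hd
      nlinarith [ht.le, hC]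
    have hWD : Wt + (proj (Wt - μ ^ d • G) - Wt) = proj (Wt - μ ^ d • G) := by abel
    have hexp := expand_W X Wt Ht (proj (Wt - μ ^ d • G) - Wt)
    rw [hWD] at hexp
    rw [hexp]
    exact core_ineq (μ ^ d) C σ _ _ _ ht hσ1 hCt (minner_self_nonneg _)
      (hDS_W Wt G hW (μ ^ d)) (prodbound_right _ Ht)
  · set G := gradH X Wt Ht with hG
    set C : ℝ := 16 * (M : ℝ) * l * hbound Wt ^ 2 with hCdef
    have hC : 0 ≤ C := by positivity
    have hε : 0 < 2 * (1 - σ) / (C + 1) := by positivity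
    obtain ⟨s, hs⟩ := exists_pow_lt_of_lt_one hε hμ1
    refine ⟨s, ?_⟩
    have ht : 0 < μ ^ s := pow_pos hμ0 s
    have hCt : C * μ ^ s ≤ 2 * (1 - σ) := by
      have h2 : μ ^ s * (C + 1) < 2 * (1 - σ) := (lt_div_iff₀ (by positivity)).mp hs
      nlinarith [ht.le, hC]
    have hWD : Ht + (projJ (Ht - μ ^ s • G) - Ht) = projJ (Ht - μ ^ s • G) := by abel
    have hexp := expand_H X Wt Ht (projJ (Ht - μ ^ s • G) - Ht)
    rw [hWD] at hexp
    rw [hexp]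
    exact core_ineq (μ ^ s) C σ _ _ _ ht hσ1 hCt (minner_self_nonneg _)
      (hDS_H Ht G hH (μ ^ s)) (prodbound_left Wt _)
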